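/- arXiv:2107.01141 — 4 statements merged into one kernel-verified Lean document; each statement's English description precedes it below -/
import Mathlib

section
/- Let Λ be a finite-dimensional algebra, T a functorially finite torsion class in mod Λ, and F a functorially finite torsion-free class in mod Λ. Then the intersection T ∩ F is a functorially finite subcategory of mod Λ. -/
/- Common setup: `Λ` is a finite-dimensional algebra over a field `K`.
`mod Λ` is modelled as the finitely generated objects of `ModuleCat Λ`. -/

open CategoryTheory Limits

noncomputable section

variable {K : Type} [Field K] {Λ : Type} [Ring Λ] [Algebra K Λ] [FiniteDimensional K Λ]

/-- finitely generated (= finite length, since `Λ` is finite dimensional) module -/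
abbrev FG {Λ : Type} [Ring Λ] (X : ModuleCat.{0} Λ) : Prop := Module.Finite Λ X

/-- all morphisms from `X` to `Y` vanish -/
def homZero {Λ : Type} [Ring Λ] (X Y : ModuleCat.{0} Λ) : Prop := ∀ f : X ⟶ Y, f = 0

variable (Λ) in
/-- the right Hom-perpendicular of a class, inside `mod Λ` -/
def rperp [Ring Λ] (S : Set (ModuleCat.{0} Λ)) : Set (ModuleCat.{0} Λ) :=
  {Y | FG Y ∧ ∀ X ∈ S, homZero X Y}

def lperp {Λ : Type} [Ring Λ] (S : Set (ModuleCat.{0} Λ)) : Set (ModuleCat.{0} Λ) :=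
  {X | FG X ∧ ∀ Y ∈ S, homZero X Y}

def rperpObj {Λ : Type} [Ring Λ] (M : ModuleCat.{0} Λ) : Set (ModuleCat.{0} Λ) :=
  {Y | FG Y ∧ homZero M Y}

def lperpObj {Λ : Type} [Ring Λ] (M : ModuleCat.{0} Λ) : Set (ModuleCat.{0} Λ) :=
  {X | FG X ∧ homZero X M}

section Defs
variable {Λ : Type} [Ring Λ]

def ClosedUnderQuotients (S : Set (ModuleCat.{0} Λ)) : Prop :=
  ∀ ⦃X Y : ModuleCat.{0} Λ⦄ (f : X ⟶ Y), Epi f → X ∈ S → Y ∈ S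

def ClosedUnderSubobjects (S : Set (ModuleCat.{0} Λ)) : Prop :=
  ∀ ⦃X Y : ModuleCat.{0} Λ⦄ (f : X ⟶ Y), Mono f → Y ∈ S → X ∈ S

def ClosedUnderExtensions (S : Set (ModuleCat.{0} Λ)) : Prop :=
  ∀ E : ShortComplex (ModuleCat.{0} Λ), E.ShortExact → E.X₁ ∈ S → E.X₃ ∈ S → E.X₂ ∈ S

/-- a torsion class in `mod Λ`: a class of f.g. modules closed under extensions and quotients -/
def IsTorsionClass (S : Set (ModuleCat.{0} Λ)) : Prop :=
  (∀ X ∈ S, FG X) ∧ ClosedUnderExtensions S ∧ ClosedUnderQuotients S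

/-- a torsion-free class in `mod Λ` -/
def IsTorsionFreeClass (S : Set (ModuleCat.{0} Λ)) : Prop :=
  (∀ X ∈ S, FG X) ∧ ClosedUnderExtensions S ∧ ClosedUnderSubobjects S

/-- a torsion pair in `mod Λ` -/
def IsTorsionPair (T F : Set (ModuleCat.{0} Λ)) : Prop :=
  (∀ X ∈ T, FG X) ∧ (∀ X ∈ F, FG X) ∧ F = rperp Λ T ∧ T = lperp F

def RightApprox (S : Set (ModuleCat.{0} Λ)) (X : ModuleCat.{0} Λ) : Prop :=
  ∃ A ∈ S, ∃ a : A ⟶ X, ∀ B ∈ S, ∀ f : B ⟶ X, ∃ g : B ⟶ A, g ≫ a = f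

def LeftApprox (S : Set (ModuleCat.{0} Λ)) (X : ModuleCat.{0} Λ) : Prop :=
  ∃ A ∈ S, ∃ a : X ⟶ A, ∀ B ∈ S, ∀ f : X ⟶ B, ∃ g : A ⟶ B, a ≫ g = f

/-- functorially finite as a subcategory of `mod Λ` -/
def FunctoriallyFinite (S : Set (ModuleCat.{0} Λ)) : Prop :=
  ∀ X : ModuleCat.{0} Λ, FG X → RightApprox S X ∧ LeftApprox S X

/-- a wide subcategory of `mod Λ` -/
def IsWide (S : Set (ModuleCat.{0} Λ)) : Prop :=
  (∀ X ∈ S, FG X) ∧ ClosedUnderExtensions S ∧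
  (∀ ⦃X Y : ModuleCat.{0} Λ⦄ (f : X ⟶ Y), X ∈ S → Y ∈ S → kernel f ∈ S) ∧
  (∀ ⦃X Y : ModuleCat.{0} Λ⦄ (f : X ⟶ Y), X ∈ S → Y ∈ S → cokernel f ∈ S)

/-- a Serre subcategory of `mod Λ` -/
def IsSerre (S : Set (ModuleCat.{0} Λ)) : Prop :=
  (∀ X ∈ S, FG X) ∧ ClosedUnderExtensions S ∧ ClosedUnderSubobjects S ∧ ClosedUnderQuotients S

/-- `Gen M`: quotients of finite direct sums of copies of `M` -/
def GenSet (M : ModuleCat.{0} Λ) : Set (ModuleCat.{0} Λ) :=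
  {X | ∃ (n : ℕ) (f : (⨁ fun _ : Fin n => M) ⟶ X), Epi f}

/-- `X` is a direct summand of `B` -/
def DirectSummandOf (X B : ModuleCat.{0} Λ) : Prop :=
  ∃ (i : X ⟶ B) (p : B ⟶ X), i ≫ p = 𝟙 X

/-- `add M`: direct summands of finite direct sums of copies of `M` -/
def addClos (M : ModuleCat.{0} Λ) : Set (ModuleCat.{0} Λ) :=
  {X | ∃ n : ℕ, DirectSummandOf X (⨁ fun _ : Fin n => M)}

/-- `Ext¹(M, X) = 0`, expressed via splitting of short exact sequences -/
def ext1Zero (M X : ModuleCat.{0} Λ) : Prop :=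
  ∀ E : ShortComplex (ModuleCat.{0} Λ), E.ShortExact →
    Nonempty (E.X₁ ≅ X) → Nonempty (E.X₃ ≅ M) → Nonempty E.Splitting

/-- an indecomposable (nonzero) module -/
def Indec (M : ModuleCat.{0} Λ) : Prop :=
  FG M ∧ ¬ IsZero M ∧ ∀ A B : ModuleCat.{0} Λ, Nonempty (M ≅ A ⊞ B) → IsZero A ∨ IsZero B

/-- the epimorphism of the sequence is right almost split: any non-split-epi into `X₃`
from a f.g. module factors through it -/
def RightAlmostSplit (E : ShortComplex (ModuleCat.{0} Λ)) : Prop :=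
  ∀ Z : ModuleCat.{0} Λ, FG Z → ∀ f : Z ⟶ E.X₃,
    (¬ ∃ s : E.X₃ ⟶ Z, s ≫ f = 𝟙 E.X₃) → ∃ h : Z ⟶ E.X₂, h ≫ E.g = f

/-- an almost split (Auslander-Reiten) sequence -/
def IsAlmostSplitSeq (E : ShortComplex (ModuleCat.{0} Λ)) : Prop :=
  E.ShortExact ∧ FG E.X₂ ∧ ¬ Nonempty E.Splitting ∧ Indec E.X₁ ∧ Indec E.X₃ ∧
    RightAlmostSplit E

/-- `N = τ M` for `M` indecomposable: either `M` is projective and `N = 0`, or there is an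
almost split sequence `0 → N → E → M → 0` -/
def IsTauIndec (N M : ModuleCat.{0} Λ) : Prop :=
  (Projective M ∧ IsZero N) ∨
    ∃ E : ShortComplex (ModuleCat.{0} Λ), IsAlmostSplitSeq E ∧
      Nonempty (E.X₁ ≅ N) ∧ Nonempty (E.X₃ ≅ M)

/-- `N = τ M`, the Auslander-Reiten translate, extended additively over a decomposition
of `M` into indecomposables -/
def IsTauOf (N M : ModuleCat.{0} Λ) : Prop :=
  ∃ (n : ℕ) (Ms Ns : Fin n → ModuleCat.{0} Λ),
    Nonempty (M ≅ ⨁ Ms) ∧ Nonempty (N ≅ ⨁ Ns) ∧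
      ∀ i, Indec (Ms i) ∧ IsTauIndec (Ns i) (Ms i)

end Defs
section Defs2
variable {Λ : Type} [Ring Λ]

/-- `a : A ⟶ X` is a right `S`-approximation of `X` -/
def RightApproxMap (S : Set (ModuleCat.{0} Λ)) {A X : ModuleCat.{0} Λ} (a : A ⟶ X) : Prop :=
  ∀ B ∈ S, ∀ f : B ⟶ X, ∃ g : B ⟶ A, g ≫ a = f

/-- `a : X ⟶ A` is a left `S`-approximation of `X` -/
def LeftApproxMap (S : Set (ModuleCat.{0} Λ)) {X A : ModuleCat.{0} Λ} (a : X ⟶ A) : Prop :=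
  ∀ B ∈ S, ∀ f : X ⟶ B, ∃ g : A ⟶ B, a ≫ g = f

def RightMinimal {A X : ModuleCat.{0} Λ} (a : A ⟶ X) : Prop :=
  ∀ g : A ⟶ A, g ≫ a = a → IsIso g

def LeftMinimal {X A : ModuleCat.{0} Λ} (a : X ⟶ A) : Prop :=
  ∀ g : A ⟶ A, a ≫ g = a → IsIso g

/-- `X` is a simple object of the subcategory `S`: it is nonzero and has no proper nonzero
subobject lying in `S` -/
def SimpleIn (S : Set (ModuleCat.{0} Λ)) (X : ModuleCat.{0} Λ) : Prop :=
  X ∈ S ∧ ¬ IsZero X ∧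
    ∀ (Y : ModuleCat.{0} Λ) (f : Y ⟶ X), Mono f → Y ∈ S → IsZero Y ∨ IsIso f

/-- a basic module: direct sum of pairwise non-isomorphic indecomposables -/
def IsBasic (M : ModuleCat.{0} Λ) : Prop :=
  ∃ (n : ℕ) (Ms : Fin n → ModuleCat.{0} Λ), Nonempty (M ≅ ⨁ Ms) ∧ (∀ i, Indec (Ms i)) ∧
    ∀ i j, i ≠ j → IsEmpty (Ms i ≅ Ms j)

/-- `S` is a functorially finite subcategory of the subcategory `W` -/
def FunctoriallyFiniteIn (W S : Set (ModuleCat.{0} Λ)) : Prop :=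
  ∀ X ∈ W, RightApprox S X ∧ LeftApprox S X

/-- `V` is a wide subcategory of the (wide, exactly embedded) subcategory `W` -/
def IsWideIn (W V : Set (ModuleCat.{0} Λ)) : Prop :=
  V ⊆ W ∧
  (∀ E : ShortComplex (ModuleCat.{0} Λ), E.ShortExact → E.X₂ ∈ W →
    E.X₁ ∈ V → E.X₃ ∈ V → E.X₂ ∈ V) ∧
  (∀ ⦃X Y : ModuleCat.{0} Λ⦄ (f : X ⟶ Y), X ∈ V → Y ∈ V → kernel f ∈ V) ∧
  (∀ ⦃X Y : ModuleCat.{0} Λ⦄ (f : X ⟶ Y), X ∈ V → Y ∈ V → cokernel f ∈ V)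

/-- the left wide subcategory `W_L(T)` of a torsion class `T` -/
def WL (T : Set (ModuleCat.{0} Λ)) : Set (ModuleCat.{0} Λ) :=
  {X | X ∈ T ∧ ∀ Y ∈ T, ∀ f : Y ⟶ X, kernel f ∈ T}

/-- the right wide subcategory `W_R(F)` of a torsion-free class `F` -/
def WR (F : Set (ModuleCat.{0} Λ)) : Set (ModuleCat.{0} Λ) :=
  {X | X ∈ F ∧ ∀ Y ∈ F, ∀ f : X ⟶ Y, cokernel f ∈ F}

/-- `S` is a Serre subcategory of the subcategory `A`: closed under subobjects, quotients and
extensions within `A` -/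
def IsSerreIn (A S : Set (ModuleCat.{0} Λ)) : Prop :=
  S ⊆ A ∧
  (∀ ⦃X Y : ModuleCat.{0} Λ⦄ (f : X ⟶ Y), Mono f → X ∈ A → Y ∈ S → X ∈ S) ∧
  (∀ ⦃X Y : ModuleCat.{0} Λ⦄ (f : X ⟶ Y), Epi f → Y ∈ A → X ∈ S → Y ∈ S) ∧
  (∀ E : ShortComplex (ModuleCat.{0} Λ), E.ShortExact → E.X₂ ∈ A →
    E.X₁ ∈ S → E.X₃ ∈ S → E.X₂ ∈ S)

/-- `X` is split projective in `T`: every epimorphism in `T` onto `X` splits -/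
def SplitProjIn (T : Set (ModuleCat.{0} Λ)) (X : ModuleCat.{0} Λ) : Prop :=
  X ∈ T ∧ ∀ Y ∈ T, ∀ f : Y ⟶ X, Epi f → ∃ s : X ⟶ Y, s ≫ f = 𝟙 X

/-- the Ext-projective objects of `T` -/
def extProj (T : Set (ModuleCat.{0} Λ)) : Set (ModuleCat.{0} Λ) :=
  {Q | Q ∈ T ∧ ∀ X ∈ T, ext1Zero Q X}

/-- `(M, P[1])` (with `tM = τ M`) is a support `τ`-rigid pair -/
def tauRigidPair (M P tM : ModuleCat.{0} Λ) : Prop :=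
  FG M ∧ FG P ∧ IsTauOf tM M ∧ homZero M tM ∧ Projective P ∧ homZero P M

/-- `(M, P[1])` is support `τ`-tilting: it is support `τ`-rigid and maximal as such -/
def IsSupportTauTilting (M P tM : ModuleCat.{0} Λ) : Prop :=
  tauRigidPair M P tM ∧
  (∀ N tN : ModuleCat.{0} Λ, FG N → IsTauOf tN N →
    homZero M tN → homZero N tM → homZero N tN → homZero P N → N ∈ addClos M) ∧
  (∀ Q : ModuleCat.{0} Λ, FG Q → Projective Q → homZero Q M → Q ∈ addClos P)

/-- `I = ν P`, the Nakayama functor applied to the projective `P`, characterised by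
`I` injective with `Hom(X, νP) ≅ D Hom(P, X)`, so `^⊥(νP) = P^⊥` -/
def IsNuOf (P I : ModuleCat.{0} Λ) : Prop :=
  FG I ∧ Injective I ∧ ∀ X : ModuleCat.{0} Λ, FG X → (homZero X I ↔ homZero P X)

/-- `M = τ⁻¹ N` for `N` indecomposable -/
def IsTauInvIndec (M N : ModuleCat.{0} Λ) : Prop :=
  (Injective N ∧ IsZero M) ∨
    ∃ E : ShortComplex (ModuleCat.{0} Λ), IsAlmostSplitSeq E ∧
      Nonempty (E.X₁ ≅ N) ∧ Nonempty (E.X₃ ≅ M)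

/-- `M = τ⁻¹ N`, extended additively -/
def IsTauInvOf (M N : ModuleCat.{0} Λ) : Prop :=
  ∃ (n : ℕ) (Ns Ms : Fin n → ModuleCat.{0} Λ),
    Nonempty (N ≅ ⨁ Ns) ∧ Nonempty (M ≅ ⨁ Ms) ∧
      ∀ i, Indec (Ns i) ∧ IsTauInvIndec (Ms i) (Ns i)

/-- `W` is a `τ`-perpendicular subcategory of `mod Λ` -/
def IsTauPerp (W : Set (ModuleCat.{0} Λ)) : Prop :=
  ∃ M P tM : ModuleCat.{0} Λ, tauRigidPair M P tM ∧
    W = {X | FG X ∧ homZero M X ∧ homZero P X ∧ homZero X tM}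

/-- `W` is a `τ⁻¹`-perpendicular subcategory of `mod Λ` -/
def IsTauInvPerp (W : Set (ModuleCat.{0} Λ)) : Prop :=
  ∃ N I tiN : ModuleCat.{0} Λ, FG N ∧ FG I ∧ IsTauInvOf tiN N ∧ homZero tiN N ∧
    Injective I ∧ homZero N I ∧
    W = {X | FG X ∧ homZero X N ∧ homZero X I ∧ homZero tiN X}

/-- the image of a class `A` under the torsion-free quotient functor `f_{M^⊥}` for the
torsion pair `(Gen M, M^⊥)` -/
def tfQuotSet (M : ModuleCat.{0} Λ) (A : Set (ModuleCat.{0} Λ)) : Set (ModuleCat.{0} Λ) :=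
  {Y | ∃ X ∈ A, ∃ p : X ⟶ Y, Epi p ∧ kernel p ∈ GenSet M ∧ Y ∈ rperpObj M}

/-- `X` is a projective object of the exactly embedded subcategory `W` -/
def ProjIn (W : Set (ModuleCat.{0} Λ)) (X : ModuleCat.{0} Λ) : Prop :=
  X ∈ W ∧ ∀ A B : ModuleCat.{0} Λ, A ∈ W → B ∈ W → ∀ e : A ⟶ B, Epi e →
    ∀ f : X ⟶ B, ∃ h : X ⟶ A, h ≫ e = f

def RightAlmostSplitIn (W : Set (ModuleCat.{0} Λ)) (E : ShortComplex (ModuleCat.{0} Λ)) : Prop :=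
  ∀ Z ∈ W, ∀ f : Z ⟶ E.X₃, (¬ ∃ s : E.X₃ ⟶ Z, s ≫ f = 𝟙 E.X₃) → ∃ h : Z ⟶ E.X₂, h ≫ E.g = f

/-- an almost split sequence of the exactly embedded subcategory `W` -/
def IsASSIn (W : Set (ModuleCat.{0} Λ)) (E : ShortComplex (ModuleCat.{0} Λ)) : Prop :=
  E.ShortExact ∧ E.X₁ ∈ W ∧ E.X₂ ∈ W ∧ E.X₃ ∈ W ∧ ¬ Nonempty E.Splitting ∧
    Indec E.X₁ ∧ Indec E.X₃ ∧ RightAlmostSplitIn W E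

/-- `tN = τ_W N` for `N` indecomposable, where `τ_W` is the AR translate of `W` -/
def IsTauIndecIn (W : Set (ModuleCat.{0} Λ)) (tN N : ModuleCat.{0} Λ) : Prop :=
  (ProjIn W N ∧ IsZero tN) ∨
    ∃ E : ShortComplex (ModuleCat.{0} Λ), IsASSIn W E ∧
      Nonempty (E.X₁ ≅ tN) ∧ Nonempty (E.X₃ ≅ N)

/-- `tN = τ_W N`, extended additively -/
def IsTauOfIn (W : Set (ModuleCat.{0} Λ)) (tN N : ModuleCat.{0} Λ) : Prop :=
  ∃ (n : ℕ) (Ns tNs : Fin n → ModuleCat.{0} Λ),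
    Nonempty (N ≅ ⨁ Ns) ∧ Nonempty (tN ≅ ⨁ tNs) ∧
      ∀ i, (Ns i ∈ W ∧ Indec (Ns i)) ∧ IsTauIndecIn W (tNs i) (Ns i)

end Defs2

/-- the intersection of a functorially finite torsion class and a functorially
finite torsion-free class in `mod Λ` is functorially finite. -/
theorem stmt_0 (T F : Set (ModuleCat.{0} Λ))
    (hT : IsTorsionClass T) (hTff : FunctoriallyFinite T)
    (hF : IsTorsionFreeClass F) (hFff : FunctoriallyFinite F) :
    FunctoriallyFinite (T ∩ F) := by
  intro X hX
  constructor
  · -- right approximation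
    obtain ⟨B, hB, f, hf⟩ := (hFff X hX).1
    obtain ⟨A, hA, a, ha⟩ := (hTff B (hF.1 B hB)).1
    refine ⟨image a, ⟨hT.2.2 (factorThruImage a) inferInstance hA,
      hF.2.2 (image.ι a) inferInstance hB⟩, image.ι a ≫ f, ?_⟩
    rintro D ⟨hDT, hDF⟩ h
    obtain ⟨h', hh'⟩ := hf D hDF h
    obtain ⟨h'', hh''⟩ := ha D hDT h'
    refine ⟨h'' ≫ factorThruImage a, ?_⟩
    rw [Category.assoc, ← Category.assoc (factorThruImage a), image.fac, ← Category.assoc,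
      hh'', hh']
  · -- left approximation
    obtain ⟨A, hA, t, ht⟩ := (hTff X hX).2
    obtain ⟨B, hB, l, hl⟩ := (hFff A (hT.1 A hA)).2
    refine ⟨image l, ⟨hT.2.2 (factorThruImage l) inferInstance hA,
      hF.2.2 (image.ι l) inferInstance hB⟩, t ≫ factorThruImage l, ?_⟩
    rintro D ⟨hDT, hDF⟩ h
    obtain ⟨h', hh'⟩ := ht D hDT h
    obtain ⟨h'', hh''⟩ := hl D hDF h'
    refine ⟨image.ι l ≫ h'', ?_⟩
    rw [Category.assoc, ← Category.assoc (factorThruImage l), image.fac, hh'', hh']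
end
end

section
/- A full subcategory S of mod Λ is a Serre subcategory (closed under extensions, subobjects, and quotients) if and only if it is simultaneously a torsion class, a torsion-free class, and a wide subcategory. Moreover, being any two of these three implies being all three. -/
/- Common setup: `Λ` is a finite-dimensional algebra over a field `K`.
`mod Λ` is modelled as the finitely generated objects of `ModuleCat Λ`. -/

open CategoryTheory Limits

noncomputable section

variable {K : Type} [Field K] {Λ : Type} [Ring Λ] [Algebra K Λ] [FiniteDimensional K Λ]

section Aux
variable {Λ : Type} [Ring Λ]

lemma serre_of_t_w {S : Set (ModuleCat.{0} Λ)} (hT : IsTorsionClass S) (hW : IsWide S) :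
    IsSerre S := by
  obtain ⟨hfg, hext, hquot⟩ := hT
  obtain ⟨-, -, hker, -⟩ := hW
  refine ⟨hfg, hext, ?_, hquot⟩
  intro X Y f hf hY
  have hcok : cokernel f ∈ S := hquot (cokernel.π f) inferInstance hY
  have him : kernel (cokernel.π f) ∈ S := hker (cokernel.π f) hY hcok
  have hmono : Mono (Abelian.factorThruImage f) := by
    have := Abelian.image.fac f
    exact mono_of_mono_fac this
  have : IsIso (Abelian.factorThruImage f) := isIso_of_mono_of_epi _
  exact hquot (inv (Abelian.factorThruImage f)) inferInstance him

lemma serre_of_f_w {S : Set (ModuleCat.{0} Λ)} (hF : IsTorsionFreeClass S) (hW : IsWide S) :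
    IsSerre S := by
  obtain ⟨hfg, hext, hsub⟩ := hF
  obtain ⟨-, -, -, hcok⟩ := hW
  refine ⟨hfg, hext, hsub, ?_⟩
  intro X Y f hf hX
  have hk : kernel f ∈ S := hsub (kernel.ι f) inferInstance hX
  have hco : cokernel (kernel.ι f) ∈ S := hcok (kernel.ι f) hk hX
  have hepi : Epi (Abelian.factorThruCoimage f) := by
    have := Abelian.coimage.fac f
    exact epi_of_epi_fac this
  have : IsIso (Abelian.factorThruCoimage f) := isIso_of_mono_of_epi _
  exact hsub (inv (Abelian.factorThruCoimage f)) inferInstance hco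

lemma wide_of_serre {S : Set (ModuleCat.{0} Λ)} (h : IsSerre S) : IsWide S := by
  obtain ⟨hfg, hext, hsub, hquot⟩ := h
  exact ⟨hfg, hext,
    fun X Y f hX _ => hsub (kernel.ι f) inferInstance hX,
    fun X Y f _ hY => hquot (cokernel.π f) inferInstance hY⟩

end Aux

/-- `S` is a Serre subcategory iff it is simultaneously a torsion class, a
torsion-free class and a wide subcategory; moreover any two of these three imply all three
(i.e. imply that `S` is Serre). -/
theorem stmt_3 (S : Set (ModuleCat.{0} Λ)) :
    (IsSerre S ↔ IsTorsionClass S ∧ IsTorsionFreeClass S ∧ IsWide S) ∧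
    (IsTorsionClass S ∧ IsTorsionFreeClass S → IsSerre S) ∧
    (IsTorsionClass S ∧ IsWide S → IsSerre S) ∧
    (IsTorsionFreeClass S ∧ IsWide S → IsSerre S) := by
  refine ⟨⟨fun h => ?_, fun ⟨hT, hF, hW⟩ => serre_of_t_w hT hW⟩,
    fun ⟨hT, hF⟩ => ⟨hT.1, hT.2.1, hF.2.2, hT.2.2⟩,
    fun ⟨hT, hW⟩ => serre_of_t_w hT hW,
    fun ⟨hF, hW⟩ => serre_of_f_w hF hW⟩
  obtain ⟨hfg, hext, hsub, hquot⟩ := h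
  exact ⟨⟨hfg, hext, hquot⟩, ⟨hfg, hext, hsub⟩, wide_of_serre ⟨hfg, hext, hsub, hquot⟩⟩
end
end

section
/- Let W ⊆ mod Λ be a functorially finite wide subcategory and A ⊆ W a subcategory that is functorially finite as a subcategory of W. Then A is functorially finite as a subcategory of mod Λ. -/
/- Common setup: `Λ` is a finite-dimensional algebra over a field `K`.
`mod Λ` is modelled as the finitely generated objects of `ModuleCat Λ`. -/

open CategoryTheory Limits

noncomputable section

variable {K : Type} [Field K] {Λ : Type} [Ring Λ] [Algebra K Λ] [FiniteDimensional K Λ]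

/-- if `W` is a functorially finite wide subcategory of `mod Λ` and `A ⊆ W` is
functorially finite in `W`, then `A` is functorially finite in `mod Λ`. -/
theorem stmt_7 (W A : Set (ModuleCat.{0} Λ)) (hW : IsWide W) (hWff : FunctoriallyFinite W)
    (hAW : A ⊆ W) (hA : FunctoriallyFiniteIn W A) :
    FunctoriallyFinite A := by
  intro X hX
  obtain ⟨hWr, hWl⟩ := hWff X hX
  constructor
  · obtain ⟨W₀, hW₀, a, ha⟩ := hWr
    obtain ⟨hAr, _⟩ := hA W₀ hW₀
    obtain ⟨A₀, hA₀, b, hb⟩ := hAr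
    exact ⟨A₀, hA₀, b ≫ a, fun B hB f => by
      obtain ⟨g, hg⟩ := ha B (hAW hB) f
      obtain ⟨h, hh⟩ := hb B hB g
      exact ⟨h, by rw [← Category.assoc, hh, hg]⟩⟩
  · obtain ⟨W₀, hW₀, a, ha⟩ := hWl
    obtain ⟨_, hAl⟩ := hA W₀ hW₀
    obtain ⟨A₀, hA₀, b, hb⟩ := hAl
    exact ⟨A₀, hA₀, a ≫ b, fun B hB f => by
      obtain ⟨g, hg⟩ := ha B (hAW hB) f
      obtain ⟨h, hh⟩ := hb B hB g
      exact ⟨h, by rw [Category.assoc, hh, hg]⟩⟩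
end
end

section
/- Let U = M ⊔ P[1] ∈ C(mod Λ) and N a module such that U ⊔ N is support τ-rigid. Then (Gen N) ∩ J(U) = (Gen(M ⊔ N)) ∩ J(U) = f_{M^⊥}(Gen(M ⊔ N)), where J(U) = (M ⊔ P)^⊥ ∩ ^⊥(τM) and f_{M^⊥} denotes the torsion-free quotient functor with respect to the torsion pair (Gen M, M^⊥). -/
/- Common setup: `Λ` is a finite-dimensional algebra over a field `K`.
`mod Λ` is modelled as the finitely generated objects of `ModuleCat Λ`. -/

open CategoryTheory Limits

noncomputable section

variable {K : Type} [Field K] {Λ : Type} [Ring Λ] [Algebra K Λ] [FiniteDimensional K Λ]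

section Aux
variable {Λ : Type} [Ring Λ]

lemma epi_of_isZero_tgt {X Z : ModuleCat.{0} Λ} (hZ : IsZero Z) (f : X ⟶ Z) : Epi f :=
  ⟨fun g h _ => hZ.eq_of_src g h⟩

lemma homZero_biprod {M N T : ModuleCat.{0} Λ} (hM : homZero M T) (hN : homZero N T) :
    homZero (M ⊞ N) T := by
  intro f
  apply biprod.hom_ext' <;> simp [hM _, hN _]

lemma homZero_to_biprod {P M N : ModuleCat.{0} Λ} (hM : homZero P M) (hN : homZero P N) :
    homZero P (M ⊞ N) := by
  intro f
  apply biprod.hom_ext <;> simp [hM _, hN _]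

lemma gen_mono_aux (M N : ModuleCat.{0} Λ) : GenSet N ⊆ GenSet (M ⊞ N) := by
  rintro X ⟨n, f, hf⟩
  refine ⟨n, biproduct.map (fun _ => (biprod.snd : M ⊞ N ⟶ N)) ≫ f, ?_⟩
  have hsplit : biproduct.map (fun _ : Fin n => (biprod.inr : N ⟶ M ⊞ N)) ≫
      biproduct.map (fun _ => (biprod.snd : M ⊞ N ⟶ N)) = 𝟙 _ := by
    apply biproduct.hom_ext'
    intro i
    simp
  have : Epi (biproduct.map (fun _ : Fin n => (biprod.snd : M ⊞ N ⟶ N))) :=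
    (SplitEpi.mk _ hsplit).epi
  exact epi_comp _ _

lemma gen_rev_aux {M N X : ModuleCat.{0} Λ} (hMX : homZero M X)
    (hX : X ∈ GenSet (M ⊞ N)) : X ∈ GenSet N := by
  obtain ⟨n, f, hf⟩ := hX
  refine ⟨n, biproduct.map (fun _ => (biprod.inr : N ⟶ M ⊞ N)) ≫ f, ?_⟩
  have hfac : f = biproduct.map (fun _ : Fin n => (biprod.snd : M ⊞ N ⟶ N)) ≫
      (biproduct.map (fun _ => (biprod.inr : N ⟶ M ⊞ N)) ≫ f) := by
    apply biproduct.hom_ext'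
    intro i
    apply biprod.hom_ext'
    · simp [hMX (biprod.inl ≫ biproduct.ι (fun _ : Fin n => M ⊞ N) i ≫ f)]
    · simp
  rw [hfac] at hf
  exact epi_of_epi (biproduct.map fun _ => (biprod.snd : M ⊞ N ⟶ N)) _

end Aux

/-- for `U ⊔ N` support `τ`-rigid with `U = M ⊔ P[1]`,
`(Gen N) ∩ J(U) = (Gen(M ⊔ N)) ∩ J(U) = f_{M^⊥}(Gen(M ⊔ N))`. -/
theorem stmt_16 (M P N tM tN : ModuleCat.{0} Λ)
    (hM : FG M) (hN : FG N) (hP : FG P)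
    (hτM : IsTauOf tM M) (hτN : IsTauOf tN N)
    (h1 : homZero M tM) (h2 : homZero M tN) (h3 : homZero N tM) (h4 : homZero N tN)
    (hPp : Projective P) (h5 : homZero P M) (h6 : homZero P N) :
    GenSet N ∩ {X : ModuleCat.{0} Λ | FG X ∧ homZero M X ∧ homZero P X ∧ homZero X tM} =
      GenSet (M ⊞ N) ∩
        {X : ModuleCat.{0} Λ | FG X ∧ homZero M X ∧ homZero P X ∧ homZero X tM} ∧
    GenSet (M ⊞ N) ∩
        {X : ModuleCat.{0} Λ | FG X ∧ homZero M X ∧ homZero P X ∧ homZero X tM} =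
      tfQuotSet M (GenSet (M ⊞ N)) := by
  constructor
  · apply Set.eq_of_subset_of_subset
    · rintro X ⟨hX, hJ⟩
      exact ⟨gen_mono_aux M N hX, hJ⟩
    · rintro X ⟨hX, hJ⟩
      exact ⟨gen_rev_aux hJ.2.1 hX, hJ⟩
  · apply Set.eq_of_subset_of_subset
    · rintro X ⟨hX, hFG, hMX, hPX, hXtM⟩
      refine ⟨X, hX, 𝟙 X, inferInstance, ?_, hFG, hMX⟩
      -- kernel of the identity is zero, hence in `GenSet M`
      have hz : IsZero (kernel (𝟙 X)) :=
        (isZero_zero _).of_iso (kernel.ofMono (𝟙 X))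
      exact ⟨0, 0, epi_of_isZero_tgt hz 0⟩
    · rintro Y ⟨X, ⟨n, f, hf⟩, p, hp, _, hFG, hMY⟩
      have hfp : Epi (f ≫ p) := epi_comp f p
      refine ⟨⟨n, f ≫ p, hfp⟩, hFG, hMY, ?_, ?_⟩
      · -- homZero P Y : lift along the epi f ≫ p using projectivity of P
        intro g
        have hlift : Projective.factorThru g (f ≫ p) ≫ (f ≫ p) = g :=
          Projective.factorThru_comp g (f ≫ p)
        have hzero : Projective.factorThru g (f ≫ p) = 0 := by
          apply biproduct.hom_ext
          intro i
          have := homZero_to_biprod h5 h6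
            (Projective.factorThru g (f ≫ p) ≫ biproduct.π (fun _ : Fin n => M ⊞ N) i)
          simpa using this
        rw [← hlift, hzero, zero_comp]
      · -- homZero Y tM : precompose with the epi f ≫ p
        intro g
        have hzero : (f ≫ p) ≫ g = 0 := by
          apply biproduct.hom_ext'
          intro i
          have := homZero_biprod h1 h3 (biproduct.ι (fun _ : Fin n => M ⊞ N) i ≫ (f ≫ p) ≫ g)
          simpa using this
        rw [← cancel_epi (f ≫ p), hzero, comp_zero]
end
end
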